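/- arXiv:1001.3429 — 5 statements merged into one kernel-verified Lean document; each statement's English description precedes it below -/
import Mathlib

section
/- Let p, q : ℤ → ℝ be functions and k : ℤ, with 1 + |p(t)| + |q(t)| ≤ K for all t ≥ t₀ for some constant K ≥ 1. Suppose y : ℤ → ℝ satisfies Δ²y(t) + p(t)Δy(t) + q(t)y(t) = 0 for all t ≥ t₀, where Δy(t) = y(t+1) − y(t). Then y(t)² + (Δy(t))² ≤ (y(t₀)² + (Δy(t₀))²) · ((1 + 2K + 2K²)^(t − t₀)) for all t ≥ t₀. -/
/-!
Write `E(t) = y(t)² + (Δy(t))²`. The equation gives `y(t+1) = y(t) + Δy(t)` and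
`Δy(t+1) = (1 - p(t)) Δy(t) - q(t) y(t)`, so by `(a + b)² ≤ 2(a² + b²)` and Cauchy–Schwarz
`E(t+1) ≤ (2 + (1 - p(t))² + q(t)²) E(t) ≤ (2 + K²) E(t) ≤ (1 + 2K + 2K²) E(t)`,
and iterating this one-step bound gives the claim.
-/

theorem le_mul_zpow_sub_of_succ_le {u : ℤ → ℝ} {r : ℝ} {t₀ : ℤ} (hr : 0 < r)
    (hu : ∀ t, t₀ ≤ t → u (t + 1) ≤ r * u t) :
    ∀ t, t₀ ≤ t → u t ≤ u t₀ * r ^ (t - t₀) := by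
  refine Int.leInduction (by simp) fun t ht ih => ?_
  calc u (t + 1) ≤ r * u t := hu t ht
    _ ≤ r * (u t₀ * r ^ (t - t₀)) := by gcongr
    _ = u t₀ * r ^ (t + 1 - t₀) := by
      rw [add_sub_right_comm, zpow_add_one₀ hr.ne']; ring

theorem sq_one_sub_add_sq_le (p q : ℝ) : (1 - p) ^ 2 + q ^ 2 ≤ (1 + |p| + |q|) ^ 2 := by
  have hp : (1 - p) ^ 2 ≤ (1 + |p|) ^ 2 :=
    sq_le_sq' (by linarith [le_abs_self p]) (by linarith [neg_abs_le p])
  nlinarith [abs_nonneg p, abs_nonneg q, sq_abs q]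

theorem sq_mul_sub_mul_le (a b c d : ℝ) :
    (c * b - d * a) ^ 2 ≤ (c ^ 2 + d ^ 2) * (a ^ 2 + b ^ 2) := by
  nlinarith [sq_nonneg (c * a + d * b)]

theorem energy_step_le {a b p q K : ℝ} (hK : 1 + |p| + |q| ≤ K) :
    (a + b) ^ 2 + ((1 - p) * b - q * a) ^ 2 ≤ (1 + 2 * K + 2 * K ^ 2) * (a ^ 2 + b ^ 2) := by
  have hK₁ : 1 ≤ K := by linarith [abs_nonneg p, abs_nonneg q]
  have hcoef : (1 - p) ^ 2 + q ^ 2 ≤ K ^ 2 :=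
    (sq_one_sub_add_sq_le p q).trans (pow_le_pow_left₀ (by positivity) hK 2)
  have hab : 0 ≤ a ^ 2 + b ^ 2 := by positivity
  calc (a + b) ^ 2 + ((1 - p) * b - q * a) ^ 2
      ≤ 2 * (a ^ 2 + b ^ 2) + ((1 - p) ^ 2 + q ^ 2) * (a ^ 2 + b ^ 2) := by
        gcongr
        · nlinarith [sq_nonneg (a - b)]
        · exact sq_mul_sub_mul_le a b (1 - p) q
    _ ≤ (2 + K ^ 2) * (a ^ 2 + b ^ 2) := by nlinarith
    _ ≤ (1 + 2 * K + 2 * K ^ 2) * (a ^ 2 + b ^ 2) :=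
        mul_le_mul_of_nonneg_right (by nlinarith) hab

theorem stmt_4_general (p q : ℤ → ℝ) (t₀ : ℤ) (K : ℝ)
    (hb : ∀ t, t₀ ≤ t → 1 + |p t| + |q t| ≤ K)
    (y : ℤ → ℝ)
    (hode : ∀ t, t₀ ≤ t →
      (y (t + 2) - 2 * y (t + 1) + y t) + p t * (y (t + 1) - y t) + q t * y t = 0) :
    ∀ t, t₀ ≤ t →
      (y t) ^ 2 + (y (t + 1) - y t) ^ 2 ≤
        ((y t₀) ^ 2 + (y (t₀ + 1) - y t₀) ^ 2) * (1 + 2 * K + 2 * K ^ 2) ^ (t - t₀) := by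
  have hK : 1 ≤ K := by linarith [hb t₀ le_rfl, abs_nonneg (p t₀), abs_nonneg (q t₀)]
  refine le_mul_zpow_sub_of_succ_le (u := fun t => y t ^ 2 + (y (t + 1) - y t) ^ 2)
    (by nlinarith) fun t ht => ?_
  have hΔ : y (t + 1 + 1) - y (t + 1) = (1 - p t) * (y (t + 1) - y t) - q t * y t := by
    rw [add_assoc, one_add_one_eq_two]; linear_combination hode t ht
  calc y (t + 1) ^ 2 + (y (t + 1 + 1) - y (t + 1)) ^ 2
      = (y t + (y (t + 1) - y t)) ^ 2 + ((1 - p t) * (y (t + 1) - y t) - q t * y t) ^ 2 := by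
        rw [hΔ]; ring
    _ ≤ _ := energy_step_le (hb t ht)

theorem stmt_4 (p q : ℤ → ℝ) (t₀ : ℤ) (K : ℝ) (hK : 1 ≤ K)
    (hb : ∀ t, t₀ ≤ t → 1 + |p t| + |q t| ≤ K)
    (y : ℤ → ℝ)
    (hode : ∀ t, t₀ ≤ t →
      (y (t + 2) - 2 * y (t + 1) + y t) + p t * (y (t + 1) - y t) + q t * y t = 0) :
    ∀ t, t₀ ≤ t →
      (y t) ^ 2 + (y (t + 1) - y t) ^ 2 ≤
        ((y t₀) ^ 2 + (y (t₀ + 1) - y t₀) ^ 2) * (1 + 2 * K + 2 * K ^ 2) ^ (t - t₀) :=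
  stmt_4_general p q t₀ K hb y hode
end

section
/- Let p, q, r : ℝ → ℝ be continuous, and let y₁ : ℝ → ℝ be a twice continuously differentiable solution of y₁'' + p·y₁' + q·y₁ = 0 with y₁(t) ≠ 0 for all t in an interval I. Define P(t) := exp(∫_a^t p(s) ds) for some a ∈ I, and let y_d(t) := y₁(t) · ∫_a^t [ (1/(P(s) y₁(s)²)) · ∫_a^s r(τ) y₁(τ) P(τ) dτ ] ds. Then y_d'' + p·y_d' + q·y_d = r on I. -/
/-!
Write `y_d = y₁ g` with `g' = R / (P y₁²)` and `R' = r y₁ P`, where `P' = p P`.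
Then `y_d' = y₁' g + R / (P y₁)`, and differentiating once more, the terms in `R` coming
from `P'` and `y₁'` cancel against `p y_d'`, leaving
`y_d'' + p y_d' + q y_d = (y₁'' + p y₁' + q y₁) g + r`.
-/

open Set

theorem ContinuousOn.hasDerivAt_intervalIntegral {E : Type*} [NormedAddCommGroup E]
    [NormedSpace ℝ E] [CompleteSpace E] {f : ℝ → E} {I : Set ℝ} {a t : ℝ}
    (hf : ContinuousOn f I) (hIo : IsOpen I) (hIc : I.OrdConnected) (ha : a ∈ I) (ht : t ∈ I) :
    HasDerivAt (fun u => ∫ s in a..u, f s) (f t) t :=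
  intervalIntegral.integral_hasDerivAt_right
    ((hf.mono (hIc.uIcc_subset ha ht)).intervalIntegrable)
    (AEStronglyMeasurable.stronglyMeasurableAtFilter_of_mem
      (hf.aestronglyMeasurable hIo.measurableSet) (hIo.mem_nhds ht))
    (hf.continuousAt (hIo.mem_nhds ht))

theorem hasDerivAt_exp_intervalIntegral {p : ℝ → ℝ} (hp : Continuous p) (a t : ℝ) :
    HasDerivAt (fun u => Real.exp (∫ s in a..u, p s)) (p t * Real.exp (∫ s in a..t, p s)) t := by
  simpa only [mul_comm] using (hp.integral_hasStrictDerivAt a t).hasDerivAt.exp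

section ReductionOfOrder

variable {p r y₁ P R g : ℝ → ℝ} {t : ℝ}

theorem hasDerivAt_mul_reductionOfOrder (hy : DifferentiableAt ℝ y₁ t)
    (hg : HasDerivAt g (1 / (P t * y₁ t ^ 2) * R t) t) (hy0 : y₁ t ≠ 0) :
    HasDerivAt (fun s => y₁ s * g s) (deriv y₁ t * g t + R t / (P t * y₁ t)) t := by
  refine (hy.hasDerivAt.mul hg).congr_deriv ?_
  field_simp

theorem hasDerivAt_deriv_mul_reductionOfOrder (hy : DifferentiableAt ℝ y₁ t)
    (hy' : DifferentiableAt ℝ (deriv y₁) t) (hP : HasDerivAt P (p t * P t) t)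
    (hR : HasDerivAt R (r t * y₁ t * P t) t) (hg : HasDerivAt g (1 / (P t * y₁ t ^ 2) * R t) t)
    (hP0 : P t ≠ 0) (hy0 : y₁ t ≠ 0) :
    HasDerivAt (fun s => deriv y₁ s * g s + R s / (P s * y₁ s))
      (deriv (deriv y₁) t * g t + r t - p t * (R t / (P t * y₁ t))) t := by
  refine ((hy'.hasDerivAt.mul hg).add
    (hR.div (hP.mul hy.hasDerivAt) (mul_ne_zero hP0 hy0))).congr_deriv ?_
  simp only [Pi.mul_apply]
  field_simp
  ring

theorem reductionOfOrder_eq {I : Set ℝ} (q : ℝ → ℝ) (hIo : IsOpen I)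
    (hy : ∀ t ∈ I, DifferentiableAt ℝ y₁ t) (hy' : ∀ t ∈ I, DifferentiableAt ℝ (deriv y₁) t)
    (hP : ∀ t ∈ I, HasDerivAt P (p t * P t) t) (hR : ∀ t ∈ I, HasDerivAt R (r t * y₁ t * P t) t)
    (hg : ∀ t ∈ I, HasDerivAt g (1 / (P t * y₁ t ^ 2) * R t) t)
    (hP0 : ∀ t ∈ I, P t ≠ 0) (hy0 : ∀ t ∈ I, y₁ t ≠ 0) (ht : t ∈ I) :
    deriv (deriv fun s => y₁ s * g s) t + p t * deriv (fun s => y₁ s * g s) t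
        + q t * (y₁ t * g t)
      = (deriv (deriv y₁) t + p t * deriv y₁ t + q t * y₁ t) * g t + r t := by
  have hderiv : EqOn (deriv fun s => y₁ s * g s)
      (fun s => deriv y₁ s * g s + R s / (P s * y₁ s)) I := fun s hs =>
    (hasDerivAt_mul_reductionOfOrder (hy s hs) (hg s hs) (hy0 s hs)).deriv
  have hderiv2 : deriv (deriv fun s => y₁ s * g s) t
      = deriv (deriv y₁) t * g t + r t - p t * (R t / (P t * y₁ t)) := by
    rw [(Filter.eventuallyEq_of_mem (hIo.mem_nhds ht) hderiv).deriv_eq]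
    exact (hasDerivAt_deriv_mul_reductionOfOrder (hy t ht) (hy' t ht) (hP t ht) (hR t ht)
      (hg t ht) (hP0 t ht) (hy0 t ht)).deriv
  rw [hderiv2, hderiv ht]
  ring

end ReductionOfOrder

theorem stmt_6_general (p q r y₁ P yd : ℝ → ℝ) (I : Set ℝ) (a : ℝ)
    (hIo : IsOpen I) (hIc : I.OrdConnected) (haI : a ∈ I)
    (hp : Continuous p) (hr : Continuous r)
    (h1 : ∀ t ∈ I, DifferentiableAt ℝ y₁ t)
    (h2 : ∀ t ∈ I, DifferentiableAt ℝ (deriv y₁) t)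
    (hode : ∀ t ∈ I, deriv (deriv y₁) t + p t * deriv y₁ t + q t * y₁ t = 0)
    (hne : ∀ t ∈ I, y₁ t ≠ 0)
    (hP : ∀ t, P t = Real.exp (∫ s in a..t, p s))
    (hyd : ∀ t, yd t = y₁ t *
      ∫ s in a..t, (1 / (P s * (y₁ s) ^ 2)) * ∫ τ in a..s, r τ * y₁ τ * P τ) :
    ∀ t ∈ I, deriv (deriv yd) t + p t * deriv yd t + q t * yd t = r t := by
  have hPd : ∀ t, HasDerivAt P (p t * P t) t := by
    rw [funext hP]
    exact hasDerivAt_exp_intervalIntegral hp a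
  have hP0 : ∀ t, P t ≠ 0 := fun t => hP t ▸ (Real.exp_pos _).ne'
  have hy₁c : ContinuousOn y₁ I := fun t ht => (h1 t ht).continuousAt.continuousWithinAt
  have hPc : Continuous P := continuous_iff_continuousAt.2 fun t => (hPd t).continuousAt
  set R := fun t => ∫ τ in a..t, r τ * y₁ τ * P τ
  have hR : ∀ t ∈ I, HasDerivAt R (r t * y₁ t * P t) t := fun t ht =>
    ((hr.continuousOn.mul hy₁c).mul hPc.continuousOn).hasDerivAt_intervalIntegral hIo hIc haI ht
  have hRc : ContinuousOn R I := fun t ht => (hR t ht).continuousAt.continuousWithinAt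
  have hgc : ContinuousOn (fun s => 1 / (P s * y₁ s ^ 2) * R s) I :=
    (continuousOn_const.div (hPc.continuousOn.mul (hy₁c.pow 2))
      fun s hs => mul_ne_zero (hP0 s) (pow_ne_zero 2 (hne s hs))).mul hRc
  have hg : ∀ t ∈ I, HasDerivAt (fun t => ∫ s in a..t, 1 / (P s * y₁ s ^ 2) * R s)
      (1 / (P t * y₁ t ^ 2) * R t) t := fun t ht =>
    hgc.hasDerivAt_intervalIntegral hIo hIc haI ht
  obtain rfl := funext hyd
  intro t ht
  rw [reductionOfOrder_eq q hIo h1 h2 (fun t _ => hPd t) hR hg (fun t _ => hP0 t) hne ht,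
    hode t ht, zero_mul, zero_add]

theorem stmt_6 (p q r y₁ P yd : ℝ → ℝ) (I : Set ℝ) (a : ℝ)
    (hIo : IsOpen I) (hIc : I.OrdConnected) (haI : a ∈ I)
    (hp : Continuous p) (hq : Continuous q) (hr : Continuous r)
    (h1 : ∀ t ∈ I, DifferentiableAt ℝ y₁ t)
    (h2 : ∀ t ∈ I, DifferentiableAt ℝ (deriv y₁) t)
    (h2c : ContinuousOn (deriv (deriv y₁)) I)
    (hode : ∀ t ∈ I, deriv (deriv y₁) t + p t * deriv y₁ t + q t * y₁ t = 0)
    (hne : ∀ t ∈ I, y₁ t ≠ 0)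
    (hP : ∀ t, P t = Real.exp (∫ s in a..t, p s))
    (hyd : ∀ t, yd t = y₁ t *
      ∫ s in a..t, (1 / (P s * (y₁ s) ^ 2)) * ∫ τ in a..s, r τ * y₁ τ * P τ) :
    ∀ t ∈ I, deriv (deriv yd) t + p t * deriv yd t + q t * yd t = r t :=
  stmt_6_general p q r y₁ P yd I a hIo hIc haI hp hr h1 h2 hode hne hP hyd
end

section
/- Let p, q, r : ℤ → ℝ with 1 − p(t) + q(t) ≠ 0 for all t, and let y₁ : ℤ → ℝ satisfy Δ²y₁(t) + p(t)Δy₁(t) + q(t)y₁(t) = 0 with y₁(t) ≠ 0 for all t ≥ a. Define E(t) := ∏_{j=a}^{t−1}(1 − p(j) + q(j)), v(t) := ∑_{x=a}^{t−1} [ E(x) · (∑_{s=a}^{x−1} r(s)y₁(s+1)/E(s+1)) / (y₁(x)y₁(x+1)) ], and y_d(t) := y₁(t)·v(t). Then Δ²y_d(t) + p(t)Δy_d(t) + q(t)y_d(t) = r(t) for all t ≥ a, where Δf(t) = f(t+1) − f(t). -/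
theorem stmt_10 (p q r y₁ E v yd : ℤ → ℝ) (a : ℤ)
    (hreg : ∀ t, 1 - p t + q t ≠ 0)
    (hode : ∀ t, a ≤ t →
      (y₁ (t + 2) - 2 * y₁ (t + 1) + y₁ t) + p t * (y₁ (t + 1) - y₁ t) + q t * y₁ t = 0)
    (hne : ∀ t, a ≤ t → y₁ t ≠ 0)
    (hE : ∀ t, E t = ∏ j ∈ Finset.Ico a t, (1 - p j + q j))
    (hv : ∀ t, v t = ∑ x ∈ Finset.Ico a t,
      E x * (∑ s ∈ Finset.Ico a x, r s * y₁ (s + 1) / E (s + 1)) / (y₁ x * y₁ (x + 1)))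
    (hyd : ∀ t, yd t = y₁ t * v t) :
    ∀ t, a ≤ t →
      (yd (t + 2) - 2 * yd (t + 1) + yd t) + p t * (yd (t + 1) - yd t) + q t * yd t = r t := by
  intro t ht
  set S : ℤ → ℝ := fun x => ∑ s ∈ Finset.Ico a x, r s * y₁ (s + 1) / E (s + 1) with hS
  set A : ℝ := E t * S t / (y₁ t * y₁ (t + 1)) with hA
  set B : ℝ := E (t + 1) * S (t + 1) / (y₁ (t + 1) * y₁ (t + 2)) with hB
  have ht1 : a ≤ t + 1 := by omega
  have ht2 : a ≤ t + 2 := by omega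
  have hEne : ∀ u, a ≤ u → E u ≠ 0 := by
    intro u hu
    rw [hE]
    exact Finset.prod_ne_zero_iff.2 fun j _ => hreg j
  have hins : ∀ u : ℤ, a ≤ u → Finset.Ico a (u + 1) = insert u (Finset.Ico a u) := by
    intro u hu
    ext x
    simp only [Finset.mem_Ico, Finset.mem_insert]
    omega
  have hE1 : E (t + 1) = E t * (1 - p t + q t) := by
    rw [hE, hE, hins t ht, Finset.prod_insert (by simp)]
    ring
  have hSstep : S (t + 1) = S t + r t * y₁ (t + 1) / E (t + 1) := by
    simp only [hS]
    rw [hins t ht, Finset.sum_insert (by simp)]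
    ring
  have h1 : v (t + 1) = v t + A := by
    rw [hv, hv, hins t ht, Finset.sum_insert (by simp)]
    rw [hA]; ring
  have h2 : v (t + 2) = v (t + 1) + B := by
    have h22 : t + 2 = (t + 1) + 1 := by ring
    rw [h22, hv, hv, hins (t + 1) ht1, Finset.sum_insert (by simp)]
    rw [hB, h22]; ring
  have hy0 := hne t ht
  have hy1 := hne (t + 1) ht1
  have hy2 := hne (t + 2) ht2
  have hEt1 := hEne (t + 1) ht1
  have hBval : y₁ (t + 2) * B = E (t + 1) * S (t + 1) / y₁ (t + 1) := by
    rw [hB]; field_simp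
  have hAval : (1 - p t + q t) * y₁ t * A = E (t + 1) * S t / y₁ (t + 1) := by
    rw [hA, hE1]; field_simp
  have hfinal : E (t + 1) * S (t + 1) / y₁ (t + 1) - E (t + 1) * S t / y₁ (t + 1) = r t := by
    rw [hSstep]; field_simp; ring
  have h0 := hode t ht
  rw [hyd, hyd, hyd, h2, h1]
  linear_combination (v t + A) * h0 + hBval - hAval + hfinal
end

section
/- Let α, β, r : ℤ → ℝ with β(t) ≠ 0 for all t, and let y₁ : ℤ → ℝ satisfy y₁(t+2) + α(t)y₁(t+1) + β(t)y₁(t) = 0 with y₁(t) ≠ 0 for all t ≥ a. Define B(t) := ∏_{j=a}^{t−1} β(j) and y_d(t) := y₁(t) · ∑_{x=a}^{t−1} [ B(x) · (∑_{s=a}^{x−1} r(s)y₁(s+1)/B(s+1)) / (y₁(x)y₁(x+1)) ]. Then y_d(t+2) + α(t)y_d(t+1) + β(t)y_d(t) = r(t) for all t ≥ a. -/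
/-!
Reduction of order: for `yd = y₁ * u` with `u t = ∑_{x<t} w x`, the homogeneous equation for `y₁`
removes every term containing `u t`, leaving the first-order equation
`y₁ (t + 2) * w (t + 1) - β t * y₁ t * w t = r t`. Writing `w x = v x / (y₁ x * y₁ (x + 1))` turns
it into `v (t + 1) - β t * v t = r t * y₁ (t + 1)`, which the summation factor `B` solves.
-/

open Finset

section IcoAddOne

variable {α M : Type*} [LinearOrder α] [LocallyFiniteOrder α] [One α] [Add α] [SuccAddOrder α]
  [NoMaxOrder α] {a b : α}

theorem Finset.prod_Ico_add_one_top [CommMonoid M] (hab : a ≤ b) (f : α → M) :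
    ∏ x ∈ Ico a (b + 1), f x = (∏ x ∈ Ico a b, f x) * f b := by
  rw [← insert_Ico_right_eq_Ico_add_one hab, prod_insert right_notMem_Ico, mul_comm]

theorem Finset.sum_Ico_add_one_top [AddCommMonoid M] (hab : a ≤ b) (f : α → M) :
    ∑ x ∈ Ico a (b + 1), f x = ∑ x ∈ Ico a b, f x + f b := by
  rw [← insert_Ico_right_eq_Ico_add_one hab, sum_insert right_notMem_Ico, add_comm]

end IcoAddOne

section ReductionOfOrder

variable {K : Type*} {α β y₁ yd : ℤ → K} {a t : ℤ}

theorem recurrence_eq_of_eq_mul_sum [CommRing K] {w : ℤ → K} (ht : a ≤ t)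
    (hode : y₁ (t + 2) + α t * y₁ (t + 1) + β t * y₁ t = 0)
    (hyd : ∀ s, yd s = y₁ s * ∑ x ∈ Ico a s, w x) :
    yd (t + 2) + α t * yd (t + 1) + β t * yd t = y₁ (t + 2) * w (t + 1) - β t * y₁ t * w t := by
  have hsum₁ := sum_Ico_add_one_top ht w
  have hsum₂ : ∑ x ∈ Ico a (t + 2), w x = ∑ x ∈ Ico a (t + 1), w x + w (t + 1) := by
    rw [show t + 2 = t + 1 + 1 by ring]
    exact sum_Ico_add_one_top (by omega) w
  rw [hyd, hyd, hyd, hsum₂, hsum₁]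
  linear_combination (∑ x ∈ Ico a t, w x + w t) * hode

theorem recurrence_eq_of_eq_mul_sum_div [Field K] {v : ℤ → K} (ht : a ≤ t)
    (hode : y₁ (t + 2) + α t * y₁ (t + 1) + β t * y₁ t = 0)
    (h₀ : y₁ t ≠ 0) (h₂ : y₁ (t + 2) ≠ 0)
    (hyd : ∀ s, yd s = y₁ s * ∑ x ∈ Ico a s, v x / (y₁ x * y₁ (x + 1))) :
    yd (t + 2) + α t * yd (t + 1) + β t * yd t = (v (t + 1) - β t * v t) / y₁ (t + 1) := by
  rw [recurrence_eq_of_eq_mul_sum ht hode hyd, show t + 1 + 1 = t + 2 by ring]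
  field_simp

theorem mul_sum_Ico_add_one_sub_mul_sum_Ico [Field K] {B g : ℤ → K} (ht : a ≤ t)
    (hB : B (t + 1) = B t * β t) (hB₀ : B (t + 1) ≠ 0) :
    B (t + 1) * ∑ s ∈ Ico a (t + 1), g s / B (s + 1)
      - β t * (B t * ∑ s ∈ Ico a t, g s / B (s + 1)) = g t := by
  rw [sum_Ico_add_one_top ht, mul_add, mul_div_cancel₀ _ hB₀, hB]
  ring

end ReductionOfOrder

theorem stmt_11 (α β r y₁ B yd : ℤ → ℝ) (a : ℤ)
    (hβ : ∀ t, β t ≠ 0)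
    (hode : ∀ t, a ≤ t → y₁ (t + 2) + α t * y₁ (t + 1) + β t * y₁ t = 0)
    (hne : ∀ t, a ≤ t → y₁ t ≠ 0)
    (hB : ∀ t, B t = ∏ j ∈ Finset.Ico a t, β j)
    (hyd : ∀ t, yd t = y₁ t * ∑ x ∈ Finset.Ico a t,
      B x * (∑ s ∈ Finset.Ico a x, r s * y₁ (s + 1) / B (s + 1)) / (y₁ x * y₁ (x + 1))) :
    ∀ t, a ≤ t → yd (t + 2) + α t * yd (t + 1) + β t * yd t = r t := by
  intro t ht
  have hB₁ : B (t + 1) = B t * β t := by rw [hB, hB, prod_Ico_add_one_top ht]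
  have hB₁₀ : B (t + 1) ≠ 0 := by rw [hB]; exact prod_ne_zero_iff.mpr fun j _ => hβ j
  have hy₁ : y₁ (t + 1) ≠ 0 := hne (t + 1) (by omega)
  rw [recurrence_eq_of_eq_mul_sum_div ht (hode t ht) (hne t ht) (hne (t + 2) (by omega)) hyd,
    mul_sum_Ico_add_one_sub_mul_sum_Ico ht hB₁ hB₁₀, mul_div_cancel_right₀ _ hy₁]
end

section
/- Let α, β ∈ ℝ with β ≠ 0 and α² > β, and let λ := −α − √(α² − β) (assume λ ≠ 0). For r : ℤ → ℝ define y_d(t) := ∑_{x=a}^{t−1} ∑_{s=a}^{x−1} r(s) · λ^{t+s−2x} · β^{x−1−s} for t ≥ a. Then y_d(t+2) + 2α·y_d(t+1) + β·y_d(t) = r(t) for all t ≥ a. -/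
/-!
The inner sum `G u x = ∑_{a ≤ s < x} r s λ^(u+s-2x) β^(x-1-s)` is geometric in `u`,
`G (u+1) x = λ G u x`, so in `y (t+2) + 2α y (t+1) + β y t` every term with `x < t` is
`(λ² + 2αλ + β) G t x = 0`. What survives is the boundary `G (t+2) (t+1) + 2α G (t+1) t`,
and since `G (t+2) (t+1) = β G t t + r t`, it equals `(λ² + 2αλ + β) G t t + r t = r t`.
-/

open Finset

lemma Finset.sum_Ico_add_one_right {ι M : Type*} [LinearOrder ι] [One ι] [Add ι]
    [LocallyFiniteOrder ι] [SuccAddOrder ι] [NoMaxOrder ι] [AddCommMonoid M] (f : ι → M)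
    {a b : ι} (h : a ≤ b) : ∑ x ∈ Ico a (b + 1), f x = ∑ x ∈ Ico a b, f x + f b := by
  rw [Ico_add_one_right_eq_Icc, ← Ico_insert_right h, sum_insert right_notMem_Ico, add_comm]

section ReductionOfOrder

variable {K : Type*} [Field K] (r : ℤ → K) (lam β : K) (a : ℤ)

noncomputable def reductionOfOrderInner (u x : ℤ) : K :=
  ∑ s ∈ Ico a x, r s * lam ^ (u + s - 2 * x) * β ^ (x - 1 - s)

variable {lam}

lemma reductionOfOrderInner_add_one (hlam : lam ≠ 0) (u x : ℤ) :
    reductionOfOrderInner r lam β a (u + 1) x = lam * reductionOfOrderInner r lam β a u x := by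
  rw [reductionOfOrderInner, reductionOfOrderInner, mul_sum]
  refine sum_congr rfl fun s _ => ?_
  rw [show u + 1 + s - 2 * x = u + s - 2 * x + 1 by ring, zpow_add_one₀ hlam]
  ring

lemma reductionOfOrderInner_add_two (hlam : lam ≠ 0) (u x : ℤ) :
    reductionOfOrderInner r lam β a (u + 2) x = lam ^ 2 * reductionOfOrderInner r lam β a u x := by
  rw [show u + 2 = u + 1 + 1 by ring, reductionOfOrderInner_add_one r β a hlam,
    reductionOfOrderInner_add_one r β a hlam]
  ring

lemma reductionOfOrderInner_diag {t : ℤ} (ht : a ≤ t) :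
    reductionOfOrderInner r lam β a (t + 2) (t + 1) =
      β * reductionOfOrderInner r lam β a t t + r t := by
  rw [reductionOfOrderInner, reductionOfOrderInner, sum_Ico_add_one_right _ ht, mul_sum]
  congr 1
  · refine sum_congr rfl fun s hs => ?_
    have hst : s < t := (mem_Ico.mp hs).2
    rw [show t + 2 + s - 2 * (t + 1) = t + s - 2 * t by ring,
      show t + 1 - 1 - s = t - 1 - s + 1 by ring, zpow_add' (Or.inr (Or.inl (by omega))),
      zpow_one]
    ring
  · rw [show t + 2 + t - 2 * (t + 1) = 0 by ring]
    simp

theorem reductionOfOrder_recurrence {α : K} (hroot : lam ^ 2 + 2 * α * lam + β = 0)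
    (hlam : lam ≠ 0) {y : ℤ → K}
    (hy : ∀ t, y t = ∑ x ∈ Ico a t, reductionOfOrderInner r lam β a t x) {t : ℤ} (ht : a ≤ t) :
    y (t + 2) + 2 * α * y (t + 1) + β * y t = r t := by
  have hdiag := reductionOfOrderInner_diag r (lam := lam) β a ht
  set G := reductionOfOrderInner r lam β a
  have hy2 : y (t + 2) = ∑ x ∈ Ico a t, lam ^ 2 * G t x + lam ^ 2 * G t t + G (t + 2) (t + 1) := by
    rw [hy, show Ico a (t + 2) = Ico a (t + 1 + 1) by ring_nf, sum_Ico_add_one_right _ (by omega),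
      sum_Ico_add_one_right _ ht]
    simp only [G, reductionOfOrderInner_add_two r β a hlam]
  have hy1 : y (t + 1) = ∑ x ∈ Ico a t, lam * G t x + lam * G t t := by
    rw [hy, sum_Ico_add_one_right _ ht]
    simp only [G, reductionOfOrderInner_add_one r β a hlam]
  rw [hy2, hy1, hy t, hdiag, ← mul_sum, ← mul_sum]
  linear_combination (∑ x ∈ Ico a t, G t x + G t t) * hroot

end ReductionOfOrder

theorem stmt_12_general (α β : ℝ) (hαβ : β < α ^ 2)
    (lam : ℝ) (hlam : lam = -α - Real.sqrt (α ^ 2 - β)) (hlam0 : lam ≠ 0)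
    (r : ℤ → ℝ) (a : ℤ) (yd : ℤ → ℝ)
    (hyd : ∀ t, yd t = ∑ x ∈ Finset.Ico a t, ∑ s ∈ Finset.Ico a x,
      r s * lam ^ (t + s - 2 * x) * β ^ (x - 1 - s)) :
    ∀ t, a ≤ t → yd (t + 2) + 2 * α * yd (t + 1) + β * yd t = r t := by
  have hsqrt : Real.sqrt (α ^ 2 - β) ^ 2 = α ^ 2 - β := Real.sq_sqrt (by linarith)
  have hroot : lam ^ 2 + 2 * α * lam + β = 0 := by
    rw [hlam]
    linear_combination hsqrt
  exact fun t ht => reductionOfOrder_recurrence r β a hroot hlam0 hyd ht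

theorem stmt_12 (α β : ℝ) (hβ : β ≠ 0) (hαβ : β < α ^ 2)
    (lam : ℝ) (hlam : lam = -α - Real.sqrt (α ^ 2 - β)) (hlam0 : lam ≠ 0)
    (r : ℤ → ℝ) (a : ℤ) (yd : ℤ → ℝ)
    (hyd : ∀ t, yd t = ∑ x ∈ Finset.Ico a t, ∑ s ∈ Finset.Ico a x,
      r s * lam ^ (t + s - 2 * x) * β ^ (x - 1 - s)) :
    ∀ t, a ≤ t → yd (t + 2) + 2 * α * yd (t + 1) + β * yd t = r t :=
  stmt_12_general α β hαβ lam hlam hlam0 r a yd hyd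
end
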